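/- arXiv:1901.03453 — 2 statements merged into one kernel-verified Lean document; each statement's English description precedes it below -/
import Mathlib

section
/- The function $\phi \mapsto \frac{1}{2}\int_0^1 \ln(2(1-\cos(2\alpha\theta)))\,d\theta$ considered as a function $f(\alpha) = \frac{1}{2}\int_0^1 \ln(2(1-\cos(2\alpha\theta)))\,d\theta$ of $\alpha\in[\pi/2,\pi]$ is strictly concave, satisfies $f(\pi/2) = f(\pi) = 0$, and hence is strictly positive on $(\pi/2,\pi)$ with a unique maximum. -/
open Real MeasureTheory Set intervalIntegral


lemma logsin_le {x : ℝ} (hx : 0 < x) (hx' : x ≤ π/2) :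
    ‖Real.log (Real.sin x)‖ ≤ 2 * Real.sqrt (π/2) * x ^ (-(1/2) : ℝ) := by
  have hs : 0 < Real.sin x := Real.sin_pos_of_pos_of_lt_pi hx (lt_of_le_of_lt hx' (by linarith [Real.pi_pos]))
  have hs1 : Real.sin x ≤ 1 := Real.sin_le_one x
  have hlog : Real.log (Real.sin x) ≤ 0 := Real.log_nonpos hs.le hs1
  rw [Real.norm_eq_abs, abs_of_nonpos hlog]
  have hj : 2/π * x ≤ Real.sin x := Real.mul_le_sin hx.le hx'
  have hπ : (0:ℝ) < π := Real.pi_pos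
  have h1 : -Real.log (Real.sin x) = Real.log (Real.sin x)⁻¹ := (Real.log_inv _).symm
  rw [h1]
  have h2 : (Real.sin x)⁻¹ ≤ π/(2*x) := by
    rw [inv_le_comm₀ hs (by positivity)]
    calc (π/(2*x))⁻¹ = 2/π * x := by field_simp
    _ ≤ Real.sin x := hj
  have h3 : Real.log (Real.sin x)⁻¹ ≤ Real.log (π/(2*x)) :=
    Real.log_le_log (by positivity) h2
  refine h3.trans ?_
  -- log y ≤ 2 √y
  have h4 : Real.log (π/(2*x)) ≤ 2 * Real.sqrt (π/(2*x)) := by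
    have := Real.log_le_sub_one_of_pos (x := Real.sqrt (π/(2*x))) (by positivity)
    rw [Real.log_sqrt (by positivity)] at this
    nlinarith [Real.sqrt_nonneg (π/(2*x))]
  refine h4.trans ?_
  have h5 : Real.sqrt (π/(2*x)) = Real.sqrt (π/2) * Real.sqrt x⁻¹ := by
    rw [← Real.sqrt_mul (by positivity)]; ring_nf
  rw [h5, Real.rpow_neg hx.le, Real.sqrt_inv, Real.sqrt_eq_rpow]
  ring_nf
  rw [Real.sqrt_eq_rpow]

lemma int_logsin_half : IntervalIntegrable (fun x => Real.log (Real.sin x)) volume 0 (π/2) := by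
  have hπ : (0:ℝ) < π/2 := by positivity
  rw [intervalIntegrable_iff, uIoc_of_le hπ.le]
  have hmeas : AEStronglyMeasurable (fun x => Real.log (Real.sin x))
      (volume.restrict (Ioc 0 (π/2))) :=
    (Real.measurable_log.comp Real.measurable_sin).aestronglyMeasurable
  have hdom : IntervalIntegrable (fun x : ℝ => 2 * Real.sqrt (π/2) * x ^ (-(1/2) : ℝ))
      volume 0 (π/2) :=
    (intervalIntegrable_rpow' (by norm_num)).const_mul _
  rw [intervalIntegrable_iff, uIoc_of_le hπ.le] at hdom
  refine hdom.mono' hmeas ?_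
  rw [ae_restrict_iff' measurableSet_Ioc]
  filter_upwards with x hx
  exact logsin_le hx.1 hx.2

lemma int_logsin_half' : IntervalIntegrable (fun x => Real.log (Real.sin x)) volume (π/2) π := by
  have h := int_logsin_half.comp_sub_left π
  simp only [Real.sin_pi_sub] at h
  rw [sub_zero, show π - π/2 = π/2 by ring] at h
  exact h.symm

lemma int_logsin_pi : IntervalIntegrable (fun x => Real.log (Real.sin x)) volume 0 π :=
  int_logsin_half.trans int_logsin_half'

lemma int_logcos_half : IntervalIntegrable (fun x => Real.log (Real.cos x)) volume 0 (π/2) := by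
  have h := int_logsin_half.comp_sub_left (π/2)
  simp only [Real.sin_pi_div_two_sub] at h
  rw [sub_zero, sub_self] at h
  exact h.symm

lemma integral_logsin_half : ∫ x in (0:ℝ)..(π/2), Real.log (Real.sin x) = -(π/2 * Real.log 2) := by
  set I := ∫ x in (0:ℝ)..(π/2), Real.log (Real.sin x) with hI
  have hcos : ∫ x in (0:ℝ)..(π/2), Real.log (Real.cos x) = I := by
    have h := integral_comp_sub_left (fun x => Real.log (Real.sin x)) (π/2) (a := 0) (b := π/2)
    simp only [Real.sin_pi_div_two_sub] at h
    rw [h, sub_zero, sub_self, hI]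
  have hsym : ∫ x in (π/2:ℝ)..π, Real.log (Real.sin x) = I := by
    have h := integral_comp_sub_left (fun x => Real.log (Real.sin x)) π (a := 0) (b := π/2)
    simp only [Real.sin_pi_sub] at h
    rw [hI, h, sub_zero, show π - π/2 = π/2 by ring]
  have hπ : ∫ x in (0:ℝ)..π, Real.log (Real.sin x) = 2 * I := by
    rw [← integral_add_adjacent_intervals int_logsin_half int_logsin_half', hsym]; ring
  have hdouble : ∫ x in (0:ℝ)..(π/2), Real.log (Real.sin (2*x)) = I := by
    have h := integral_comp_mul_left (c := (2:ℝ)) (fun x => Real.log (Real.sin x))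
      (a := 0) (b := π/2) two_ne_zero
    rw [h, show (2:ℝ)*(π/2) = π by ring, show (2:ℝ)*0 = 0 by ring, hπ, smul_eq_mul]
    ring
  have hsplit : ∫ x in (0:ℝ)..(π/2), Real.log (Real.sin (2*x))
      = ∫ x in (0:ℝ)..(π/2), (Real.log 2 + Real.log (Real.sin x) + Real.log (Real.cos x)) := by
    apply intervalIntegral.integral_congr_ae
    have hne : ∀ᵐ x : ℝ, x ≠ π/2 := by
      rw [MeasureTheory.ae_iff]
      simp only [ne_eq, not_not, setOf_eq_eq_singleton]
      exact Real.volume_singleton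
    filter_upwards [hne] with x hx hmem
    rw [uIoc_of_le (by positivity : (0:ℝ) ≤ π/2)] at hmem
    have hx2 : x < π/2 := lt_of_le_of_ne hmem.2 hx
    have hs : 0 < Real.sin x := Real.sin_pos_of_pos_of_lt_pi hmem.1
      (hx2.trans (by linarith [Real.pi_pos]))
    have hc : 0 < Real.cos x := Real.cos_pos_of_mem_Ioo ⟨by linarith [Real.pi_pos, hmem.1], hx2⟩
    rw [Real.sin_two_mul, Real.log_mul (by positivity) hc.ne', Real.log_mul two_ne_zero hs.ne']
  have hrhs : ∫ x in (0:ℝ)..(π/2), (Real.log 2 + Real.log (Real.sin x) + Real.log (Real.cos x))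
      = π/2 * Real.log 2 + I + I := by
    rw [integral_add (intervalIntegrable_const.add int_logsin_half) int_logcos_half,
      integral_add intervalIntegrable_const int_logsin_half,
      intervalIntegral.integral_const, hcos, ← hI]
    simp [smul_eq_mul]
  have : I = π/2 * Real.log 2 + I + I := by rw [← hrhs, ← hsplit, hdouble]
  linarith

lemma integral_logsin_pi : ∫ x in (0:ℝ)..π, Real.log (Real.sin x) = -(π * Real.log 2) := by
  have hsym : ∫ x in (π/2:ℝ)..π, Real.log (Real.sin x)
      = ∫ x in (0:ℝ)..(π/2), Real.log (Real.sin x) := by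
    have h := integral_comp_sub_left (fun x => Real.log (Real.sin x)) π (a := 0) (b := π/2)
    simp only [Real.sin_pi_sub] at h
    rw [h, sub_zero, show π - π/2 = π/2 by ring]
  rw [← integral_add_adjacent_intervals int_logsin_half int_logsin_half', hsym,
    integral_logsin_half]; ring

lemma ae_ne (c : ℝ) : ∀ᵐ x : ℝ, x ≠ c := by
  rw [MeasureTheory.ae_iff]
  simp only [ne_eq, not_not, setOf_eq_eq_singleton]
  exact Real.volume_singleton

lemma key {u : ℝ} (h0 : 0 < u) (h1 : u < π) :
    Real.log (2 * (1 - Real.cos (2 * u))) = 2 * Real.log (2 * Real.sin u) := by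
  have hs : 0 < Real.sin u := Real.sin_pos_of_pos_of_lt_pi h0 h1
  have h2 : 2 * (1 - Real.cos (2 * u)) = (2 * Real.sin u) ^ 2 := by
    have := Real.cos_two_mul u
    nlinarith [Real.sin_sq_add_cos_sq u]
  rw [h2, Real.log_pow]
  norm_num

lemma int_g {c : ℝ} (hc : 0 < c) (hcπ : c ≤ π) :
    IntervalIntegrable (fun u => Real.log (2 * Real.sin u)) volume 0 c := by
  have h1 : IntervalIntegrable (fun u => Real.log 2 + Real.log (Real.sin u)) volume 0 c :=
    intervalIntegrable_const.add (int_logsin_pi.mono_set (by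
      rw [uIcc_of_le hc.le, uIcc_of_le Real.pi_pos.le]
      exact Icc_subset_Icc le_rfl hcπ))
  rw [intervalIntegrable_iff, uIoc_of_le hc.le] at h1 ⊢
  refine h1.congr ?_
  filter_upwards [MeasureTheory.ae_restrict_mem measurableSet_Ioc,
    MeasureTheory.ae_restrict_of_ae (ae_ne π)] with x hx hxπ
  have hs : 0 < Real.sin x :=
    Real.sin_pos_of_pos_of_lt_pi hx.1 (lt_of_le_of_ne (hx.2.trans hcπ) hxπ)
  rw [Real.log_mul two_ne_zero hs.ne']

lemma int_gc {c : ℝ} (hc : 0 < c) (hcπ : c ≤ π) :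
    IntervalIntegrable (fun θ => Real.log (2 * Real.sin (c * θ))) volume 0 1 := by
  have h := (int_g hc hcπ).comp_mul_left (c := c)
  simpa [div_self hc.ne'] using h

lemma f_eq' {α : ℝ} (h0 : 0 < α) (h1 : α ≤ π) :
    (1/2) * ∫ θ in (0:ℝ)..1, Real.log (2 * (1 - Real.cos (2 * α * θ)))
      = ∫ θ in (0:ℝ)..1, Real.log (2 * Real.sin (α * θ)) := by
  have hstep : ∫ θ in (0:ℝ)..1, Real.log (2 * (1 - Real.cos (2 * α * θ)))
      = ∫ θ in (0:ℝ)..1, 2 * Real.log (2 * Real.sin (α * θ)) := by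
    apply intervalIntegral.integral_congr_ae
    filter_upwards [ae_ne (π / α)] with θ hθ hmem
    rw [uIoc_of_le (by norm_num : (0:ℝ) ≤ 1)] at hmem
    have hu0 : 0 < α * θ := mul_pos h0 hmem.1
    have huπ : α * θ < π := by
      rcases lt_or_eq_of_le ((mul_le_of_le_one_right h0.le hmem.2).trans h1) with h | h
      · exact h
      · exact absurd (by field_simp [h0.ne']; linarith [h] : θ = π / α) hθ
    rw [show 2 * α * θ = 2 * (α * θ) by ring, key hu0 huπ]
  rw [hstep, intervalIntegral.integral_const_mul]
  ring

lemma f_eq2 {α : ℝ} (h0 : 0 < α) (h1 : α ≤ π) :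
    ∫ θ in (0:ℝ)..1, Real.log (2 * Real.sin (α * θ))
      = Real.log 2 + α⁻¹ * ∫ u in (0:ℝ)..α, Real.log (Real.sin u) := by
  have hcomp := integral_comp_mul_left (fun u => Real.log (2 * Real.sin u))
    (a := 0) (b := 1) h0.ne'
  simp only [mul_zero, mul_one] at hcomp
  rw [hcomp, smul_eq_mul]
  have hsplit : ∫ u in (0:ℝ)..α, Real.log (2 * Real.sin u)
      = ∫ u in (0:ℝ)..α, (Real.log 2 + Real.log (Real.sin u)) := by
    apply intervalIntegral.integral_congr_ae
    filter_upwards [ae_ne π] with u hu hmem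
    rw [uIoc_of_le h0.le] at hmem
    have hs : 0 < Real.sin u :=
      Real.sin_pos_of_pos_of_lt_pi hmem.1 (lt_of_le_of_ne (hmem.2.trans h1) hu)
    rw [Real.log_mul two_ne_zero hs.ne']
  rw [hsplit, integral_add intervalIntegrable_const
    (int_logsin_pi.mono_set (by
      rw [uIcc_of_le h0.le, uIcc_of_le Real.pi_pos.le]
      exact Icc_subset_Icc le_rfl h1)),
    intervalIntegral.integral_const, smul_eq_mul, sub_zero, mul_add]
  rw [← mul_assoc, inv_mul_cancel₀ h0.ne', one_mul]

lemma strict_core {x y a b : ℝ} (hx : x ∈ Icc (π/2) π) (hy : y ∈ Icc (π/2) π)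
    (hxy : x ≠ y) (ha : 0 < a) (hb : 0 < b) (hab : a + b = 1) :
    a * (∫ θ in (0:ℝ)..1, Real.log (2 * Real.sin (x * θ)))
      + b * (∫ θ in (0:ℝ)..1, Real.log (2 * Real.sin (y * θ)))
      < ∫ θ in (0:ℝ)..1, Real.log (2 * Real.sin ((a * x + b * y) * θ)) := by
  have hπ2 : (0:ℝ) < π/2 := by positivity
  have hx0 : 0 < x := hπ2.trans_le hx.1
  have hy0 : 0 < y := hπ2.trans_le hy.1
  set z := a * x + b * y with hz
  have hzmem : z ∈ Icc (π/2) π := by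
    constructor
    · nlinarith [hx.1, hy.1]
    · nlinarith [hx.2, hy.2]
  have hz0 : 0 < z := hπ2.trans_le hzmem.1
  -- pointwise strict inequality on Ioo 0 1
  have hpoint : ∀ θ ∈ Ioo (0:ℝ) 1,
      a * Real.log (2 * Real.sin (x * θ)) + b * Real.log (2 * Real.sin (y * θ))
        < Real.log (2 * Real.sin (z * θ)) := by
    intro θ hθ
    have hθ0 := hθ.1
    have hθ1 := hθ.2
    have hxθ : x * θ ∈ Icc (0:ℝ) π :=
      ⟨(mul_pos hx0 hθ0).le, ((mul_lt_of_lt_one_right hx0 hθ1).trans_le hx.2).le⟩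
    have hyθ : y * θ ∈ Icc (0:ℝ) π :=
      ⟨(mul_pos hy0 hθ0).le, ((mul_lt_of_lt_one_right hy0 hθ1).trans_le hy.2).le⟩
    have hne : x * θ ≠ y * θ := fun h => hxy (mul_right_cancel₀ hθ0.ne' h)
    have hsin := strictConcaveOn_sin_Icc.2 hxθ hyθ hne ha hb hab
    simp only [smul_eq_mul] at hsin
    have hzθ : a * (x * θ) + b * (y * θ) = z * θ := by rw [hz]; ring
    rw [hzθ] at hsin
    have hsx : 0 < Real.sin (x * θ) := Real.sin_pos_of_pos_of_lt_pi (mul_pos hx0 hθ0)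
      ((mul_lt_of_lt_one_right hx0 hθ1).trans_le hx.2)
    have hsy : 0 < Real.sin (y * θ) := Real.sin_pos_of_pos_of_lt_pi (mul_pos hy0 hθ0)
      ((mul_lt_of_lt_one_right hy0 hθ1).trans_le hy.2)
    have hcomb : 0 < a * Real.sin (x * θ) + b * Real.sin (y * θ) := by positivity
    have hlog := strictConcaveOn_log_Ioi.concaveOn.2
      (mem_Ioi.mpr (by positivity : (0:ℝ) < 2 * Real.sin (x * θ)))
      (mem_Ioi.mpr (by positivity : (0:ℝ) < 2 * Real.sin (y * θ))) ha.le hb.le hab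
    simp only [smul_eq_mul] at hlog
    calc a * Real.log (2 * Real.sin (x * θ)) + b * Real.log (2 * Real.sin (y * θ))
        ≤ Real.log (a * (2 * Real.sin (x * θ)) + b * (2 * Real.sin (y * θ))) := hlog
      _ = Real.log (2 * (a * Real.sin (x * θ) + b * Real.sin (y * θ))) := by ring_nf
      _ < Real.log (2 * Real.sin (z * θ)) := by
          apply Real.log_lt_log (by positivity)
          linarith [hsin]
  -- integrate
  have hix := int_gc hx0 hx.2
  have hiy := int_gc hy0 hy.2
  have hiz := int_gc hz0 hzmem.2
  have hiF : IntervalIntegrable (fun θ =>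
      Real.log (2 * Real.sin (z * θ))
        - (a * Real.log (2 * Real.sin (x * θ)) + b * Real.log (2 * Real.sin (y * θ))))
      volume 0 1 := hiz.sub ((hix.const_mul a).add (hiy.const_mul b))
  have hpos := intervalIntegral_pos_of_pos_on hiF (fun θ hθ => by
    have := hpoint θ hθ; linarith) one_pos
  rw [intervalIntegral.integral_sub hiz ((hix.const_mul a).add (hiy.const_mul b)),
    intervalIntegral.integral_add (hix.const_mul a) (hiy.const_mul b),
    intervalIntegral.integral_const_mul, intervalIntegral.integral_const_mul] at hpos
  linarith

/-- The function `f(α) = ½∫₀¹ ln(2(1-cos(2αθ))) dθ` is strictly concave on `[π/2, π]`,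
vanishes at the endpoints, is strictly positive inside, and has a unique maximum. -/
theorem stmt5 (f : ℝ → ℝ)
    (hf : ∀ α, f α = (1 / 2) * ∫ θ in (0 : ℝ)..1, Real.log (2 * (1 - Real.cos (2 * α * θ)))) :
    StrictConcaveOn ℝ (Set.Icc (Real.pi / 2) Real.pi) f ∧
    f (Real.pi / 2) = 0 ∧ f Real.pi = 0 ∧
    (∀ α ∈ Set.Ioo (Real.pi / 2) Real.pi, 0 < f α) ∧
    (∃! α₀, α₀ ∈ Set.Icc (Real.pi / 2) Real.pi ∧
      IsMaxOn f (Set.Icc (Real.pi / 2) Real.pi) α₀) := by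
  have hπ : (0:ℝ) < π := Real.pi_pos
  have hπ2 : (0:ℝ) < π/2 := by positivity
  have hrep : ∀ α, 0 < α → α ≤ π →
      f α = ∫ θ in (0:ℝ)..1, Real.log (2 * Real.sin (α * θ)) := fun α h0 h1 => by
    rw [hf α, f_eq' h0 h1]
  have hrep2 : ∀ α, 0 < α → α ≤ π →
      f α = Real.log 2 + α⁻¹ * ∫ u in (0:ℝ)..α, Real.log (Real.sin u) := fun α h0 h1 => by
    rw [hrep α h0 h1, f_eq2 h0 h1]
  -- strict concavity
  have hconc : StrictConcaveOn ℝ (Set.Icc (π/2) π) f := by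
    refine ⟨convex_Icc _ _, fun x hx y hy hxy a b ha hb hab => ?_⟩
    have hx0 : 0 < x := hπ2.trans_le hx.1
    have hy0 : 0 < y := hπ2.trans_le hy.1
    have hz : a • x + b • y ∈ Set.Icc (π/2) π := (convex_Icc _ _) hx hy ha.le hb.le hab
    simp only [smul_eq_mul] at hz ⊢
    rw [hrep x hx0 hx.2, hrep y hy0 hy.2,
      hrep _ (hπ2.trans_le hz.1) hz.2]
    exact strict_core hx hy hxy ha hb hab
  -- endpoint values
  have hhalf : f (π/2) = 0 := by
    rw [hrep2 (π/2) hπ2 (by linarith), integral_logsin_half]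
    field_simp
    ring
  have hzero : f π = 0 := by
    rw [hrep2 π hπ le_rfl, integral_logsin_pi]
    field_simp
    ring
  refine ⟨hconc, hhalf, hzero, ?_, ?_⟩
  -- positivity
  · intro α hα
    have ha : 0 < (π - α)/(π/2) := by
      apply div_pos (by linarith [hα.2]) hπ2
    have hb : 0 < (α - π/2)/(π/2) := by
      apply div_pos (by linarith [hα.1]) hπ2
    have hab : (π - α)/(π/2) + (α - π/2)/(π/2) = 1 := by field_simp; ring
    have hmem1 : π/2 ∈ Set.Icc (π/2) π := ⟨le_rfl, by linarith⟩
    have hmem2 : π ∈ Set.Icc (π/2) π := ⟨by linarith, le_rfl⟩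
    have hne : π/2 ≠ π := by linarith
    have h := hconc.2 hmem1 hmem2 hne ha hb hab
    simp only [smul_eq_mul, hhalf, hzero, mul_zero, add_zero] at h
    have hcomb : (π - α)/(π/2) * (π/2) + (α - π/2)/(π/2) * π = α := by
      field_simp; ring
    rw [hcomb] at h
    exact h
  -- unique maximum
  · have hGcont : ContinuousOn (fun t => ∫ u in (0:ℝ)..t, Real.log (Real.sin u))
        (Set.Icc 0 π) := by
      have h := intervalIntegral.continuousOn_primitive_interval'
        int_logsin_pi (left_mem_uIcc (a := (0:ℝ)) (b := π))
      rwa [uIcc_of_le hπ.le] at h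
    have hfcont : ContinuousOn f (Set.Icc (π/2) π) := by
      have hsub : Set.Icc (π/2) π ⊆ Set.Icc 0 π := Icc_subset_Icc hπ2.le le_rfl
      have hcont2 : ContinuousOn
          (fun α => Real.log 2 + α⁻¹ * ∫ u in (0:ℝ)..α, Real.log (Real.sin u))
          (Set.Icc (π/2) π) := by
        refine continuousOn_const.add (ContinuousOn.mul ?_ (hGcont.mono hsub))
        exact continuousOn_id.inv₀ fun x hx => (hπ2.trans_le hx.1).ne'
      refine hcont2.congr fun α hα => ?_
      exact hrep2 α (hπ2.trans_le hα.1) hα.2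
    obtain ⟨α₀, hα₀, hmax⟩ := isCompact_Icc.exists_isMaxOn
      ⟨π/2, left_mem_Icc.mpr (by linarith)⟩ hfcont
    refine ⟨α₀, ⟨hα₀, hmax⟩, ?_⟩
    rintro β ⟨hβ, hβmax⟩
    by_contra hne
    have heq : f β = f α₀ := le_antisymm (hmax hβ) (hβmax hα₀)
    have hmemm : (1/2 : ℝ) • β + (1/2 : ℝ) • α₀ ∈ Set.Icc (π/2) π :=
      (convex_Icc _ _) hβ hα₀ (by norm_num) (by norm_num) (by norm_num)
    have h := hconc.2 hβ hα₀ hne (by norm_num : (0:ℝ) < 1/2) (by norm_num : (0:ℝ) < 1/2)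
      (by norm_num)
    have h2 := hmax hmemm
    simp only [smul_eq_mul, heq] at h h2
    simp only [Set.mem_setOf_eq] at h2
    linarith
end

section
/- Let $x_{M,j}$ be defined by the expansion $z^M = \sum_{j=0}^M x_{M,j}\, p_j(z)$ in terms of monic orthogonal polynomials $p_j$ on the unit circle with real Szegő parameters $\rho_j$. Then $x_{M+1,M} = \rho_1 - \sum_{i=1}^{M}\rho_i\rho_{i+1}$. -/
open Polynomial Finset

/-!
Comparing the coefficients of `z^{M+1}` and `z^M` in `z^{M+1} = ∑ x_{M+1,j} p_j` (only `p_M` and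
`p_{M+1}` reach degree `M`) gives `x_{M+1,M} = -p_{M+1,M}`. The Szegő recursion shows that the
constant term of `p_{n+1}` is `-ρ_{n+1}` and, since the reversed polynomial `p_{M+1}^*` carries
the constant term of `p_{M+1}` in degree `M+1`, that
`p_{M+2,M+1} = p_{M+1,M} - ρ_{M+2} p_{M+1,0} = p_{M+1,M} + ρ_{M+1} ρ_{M+2}`; induct on `M`.
-/

theorem Polynomial.coeff_reverse_natDegree {R : Type*} [Semiring R] (f : R[X]) :
    f.reverse.coeff f.natDegree = f.coeff 0 := by
  rw [coeff_reverse, revAt_le le_rfl, Nat.sub_self]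

section SzegoRecursion

variable {R : Type*} [CommRing R] (α : ℕ → R) {p : ℕ → R[X]}

theorem coeff_zero_succ_of_szego (hmonic : ∀ n, (p n).Monic)
    (hrec : ∀ n, p (n + 1) = X * p n - C (α (n + 1)) * (p n).reverse) (n : ℕ) :
    (p (n + 1)).coeff 0 = -α (n + 1) := by
  rw [hrec n, coeff_sub, coeff_X_mul_zero, coeff_C_mul, coeff_zero_reverse, (hmonic n).leadingCoeff]
  ring

theorem coeff_succ_self_of_szego (hmonic : ∀ n, (p n).Monic ∧ (p n).natDegree = n)
    (hrec : ∀ n, p (n + 1) = X * p n - C (α (n + 1)) * (p n).reverse) (n : ℕ) :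
    (p (n + 1)).coeff n = -α 1 + ∑ i ∈ Icc 1 n, α i * α (i + 1) := by
  have hconst := coeff_zero_succ_of_szego α (fun n => (hmonic n).1) hrec
  induction n with
  | zero => simp [hconst 0]
  | succ n ih =>
    have hrev : (p (n + 1)).reverse.coeff (n + 1) = -α (n + 1) := by
      simpa only [(hmonic (n + 1)).2, hconst n] using coeff_reverse_natDegree (p (n + 1))
    rw [hrec (n + 1), coeff_sub, coeff_X_mul, coeff_C_mul, hrev, ih,
      sum_Icc_succ_top (by omega : 1 ≤ n + 1)]
    ring

end SzegoRecursion

section TriangularExpansion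

variable {R : Type*} [Semiring R] {p : ℕ → R[X]}

theorem coeff_sum_C_mul_of_natDegree_le (hdeg : ∀ j, (p j).natDegree ≤ j) (c : ℕ → R)
    (N k : ℕ) :
    (∑ j ∈ range N, C (c j) * p j).coeff k = ∑ j ∈ Ico k N, c j * (p j).coeff k := by
  simp only [finsetSum_coeff, coeff_C_mul]
  refine (sum_subset (fun j hj => mem_range.2 (mem_Ico.1 hj).2) fun j hj hjk => ?_).symm
  have hjk : j < k := by simp only [mem_range, mem_Ico] at hj hjk; omega
  rw [coeff_eq_zero_of_natDegree_lt ((hdeg j).trans_lt hjk), mul_zero]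

variable {x : ℕ → ℕ → R} (hmonic : ∀ n, (p n).Monic ∧ (p n).natDegree = n)
  (hx : ∀ M, (X : R[X]) ^ M = ∑ j ∈ range (M + 1), C (x M j) * p j)
include hmonic hx

theorem expansion_coeff_self (M : ℕ) : x M M = 1 := by
  have h := congrArg (coeff · M) (hx M)
  simpa only [coeff_X_pow_self, coeff_sum_C_mul_of_natDegree_le (fun j => (hmonic j).2.le),
    Nat.Ico_succ_singleton, sum_singleton, (hmonic M).2 ▸ (hmonic M).1.coeff_natDegree,
    mul_one] using h.symm

theorem expansion_coeff_succ_self_add_coeff (M : ℕ) :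
    x (M + 1) M + (p (M + 1)).coeff M = 0 := by
  have h := congrArg (coeff · M) (hx (M + 1))
  simpa only [coeff_X_pow, if_neg (Nat.succ_ne_self M).symm,
    coeff_sum_C_mul_of_natDegree_le (fun j => (hmonic j).2.le),
    sum_Ico_succ_top (by omega : M ≤ M + 1), sum_Ico_succ_top le_rfl, Ico_self, sum_empty,
    expansion_coeff_self hmonic hx, (hmonic M).2 ▸ (hmonic M).1.coeff_natDegree, zero_add,
    mul_one, one_mul] using h.symm

end TriangularExpansion

theorem stmt12_general (ρ : ℕ → ℝ) (p : ℕ → Polynomial ℂ)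
    (hmonic : ∀ n, (p n).Monic ∧ (p n).natDegree = n)
    (hrec : ∀ M, p (M + 1) = X * p M - C ((ρ (M + 1) : ℂ)) * (p M).reverse)
    (x : ℕ → ℕ → ℂ)
    (hx : ∀ M : ℕ, (X : Polynomial ℂ) ^ M = ∑ j ∈ Finset.range (M + 1), C (x M j) * p j) :
    ∀ M : ℕ, x (M + 1) M = (ρ 1 : ℂ) - ∑ i ∈ Finset.Icc 1 M, (ρ i : ℂ) * (ρ (i + 1) : ℂ) := by
  intro M
  have hcoeff := expansion_coeff_succ_self_add_coeff hmonic hx M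
  rw [coeff_succ_self_of_szego (fun n => (ρ n : ℂ)) hmonic hrec] at hcoeff
  linear_combination hcoeff

/-- Closed form for the expansion coefficient of `z^{M+1}` in terms of monic orthogonal
polynomials on the unit circle: `x_{M+1,M} = ρ₁ - ∑_{i=1}^{M} ρ_i ρ_{i+1}`. -/
theorem stmt12 (ρ : ℕ → ℝ) (p : ℕ → Polynomial ℂ)
    (hp0 : p 0 = 1)
    (hmonic : ∀ n, (p n).Monic ∧ (p n).natDegree = n)
    (hrec : ∀ M, p (M + 1) = X * p M - C ((ρ (M + 1) : ℂ)) * (p M).reverse)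
    (x : ℕ → ℕ → ℂ)
    (hx : ∀ M : ℕ, (X : Polynomial ℂ) ^ M = ∑ j ∈ Finset.range (M + 1), C (x M j) * p j) :
    ∀ M : ℕ, x (M + 1) M = (ρ 1 : ℂ) - ∑ i ∈ Finset.Icc 1 M, (ρ i : ℂ) * (ρ (i + 1) : ℂ) :=
  stmt12_general ρ p hmonic hrec x hx
end
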